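/- arXiv:1012.4150 — 3 statements merged into one kernel-verified Lean document; each statement's English description precedes it below -/
import Mathlib

section
/- There exists a constant c with 0 < c ≤ 1 such that for every R > 0 there exists S > 0 with the following property: for every tree T (a connected acyclic simple graph on a countable vertex set, equipped with the graph metric) and every locally compact bounded operator A on ℓ²(V(T),H₀) of propagation at most R, there is a unit vector ξ ∈ ℓ²(V(T),H₀) whose support has diameter at most S and such that ‖Aξ‖ ≥ c‖A‖. In other words, the family of all countable trees has the uniform operator norm localization property. -/
noncomputable section

open scoped ENNReal

/-- ℓ²(Y, H): the Hilbert space of square-summable `H`-valued families indexed by `Y`. -/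
abbrev L2 (Y : Type*) (H : Type*) [NormedAddCommGroup H] [InnerProductSpace ℂ H] : Type _ :=
  lp (fun _ : Y => H) 2

namespace Roe

variable {Y H : Type*} [NormedAddCommGroup H] [InnerProductSpace ℂ H]

set_option maxHeartbeats 1000000 in
/-- The matrix entry `T_{x,y}` of a bounded operator `T` on `ℓ²(Y,H)`: the continuous linear
map on `H` determined by `T_{x,y} v = (T (δ_y ⊗ v)) x`. -/
def entry (T : L2 Y H →L[ℂ] L2 Y H) (x y : Y) : H →L[ℂ] H :=
  letI := Classical.decEq Y
  LinearMap.mkContinuous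
    { toFun := fun v => T (lp.single 2 y v) x
      map_add' := by
        intro v w
        show (T (lp.single 2 y (v + w))) x = (T (lp.single 2 y v)) x + (T (lp.single 2 y w)) x
        have h : lp.single (E := fun _ : Y => H) 2 y (v + w)
            = lp.single 2 y v + lp.single 2 y w := by
          apply lp.ext
          funext j
          by_cases hj : j = y
          · subst hj
            simp only [lp.single_apply_self, lp.coeFn_add, Pi.add_apply]
          · simp only [lp.single_apply_ne _ _ _ hj, lp.coeFn_add, Pi.add_apply, add_zero]
        rw [h, map_add]
        simp only [lp.coeFn_add, Pi.add_apply]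
      map_smul' := by
        intro c v
        show (T (lp.single 2 y (c • v))) x = c • (T (lp.single 2 y v)) x
        rw [lp.single_smul, map_smul]
        simp only [lp.coeFn_smul, Pi.smul_apply] }
    ‖T‖
    (by
      intro v
      show ‖(T (lp.single 2 y v)) x‖ ≤ ‖T‖ * ‖v‖
      have h1 : ‖(T (lp.single 2 y v)) x‖ ≤ ‖T (lp.single 2 y v)‖ :=
        lp.norm_apply_le_norm (by norm_num) _ _
      have h2 : ‖T (lp.single 2 y v)‖ ≤ ‖T‖ * ‖lp.single (E := fun _ : Y => H) 2 y v‖ :=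
        T.le_opNorm _
      have h3 : ‖lp.single (E := fun _ : Y => H) 2 y v‖ = ‖v‖ := by
        simpa using lp.norm_single (E := fun _ : Y => H) (p := 2) (by norm_num) (fun _ => v) y
      calc ‖(T (lp.single 2 y v)) x‖ ≤ ‖T‖ * ‖lp.single (E := fun _ : Y => H) 2 y v‖ :=
            le_trans h1 h2
        _ = ‖T‖ * ‖v‖ := by rw [h3])

/-- `T` has propagation at most `R` with respect to the distance function `d`. -/
def PropagationLE (d : Y → Y → ℝ) (T : L2 Y H →L[ℂ] L2 Y H) (R : ℝ) : Prop :=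
  ∀ x y : Y, R < d x y → entry T x y = 0

/-- A set is bounded with respect to the distance function `d`. -/
def DBounded (d : Y → Y → ℝ) (B : Set Y) : Prop :=
  ∃ C : ℝ, ∀ x ∈ B, ∀ y ∈ B, d x y ≤ C

/-- `T` is locally compact with respect to the distance function `d`: all matrix entries are
compact operators, and over every bounded set only finitely many matrix entries are nonzero. -/
def LocallyCompact (d : Y → Y → ℝ) (T : L2 Y H →L[ℂ] L2 Y H) : Prop :=
  (∀ x y : Y, IsCompactOperator (entry T x y)) ∧
    ∀ B : Set Y, DBounded d B →
      {p : Y × Y | p.1 ∈ B ∧ p.2 ∈ B ∧ entry T p.1 p.2 ≠ 0}.Finite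

/-- Membership in the algebraic Roe algebra `ℂ[Y]`: locally compact and finite propagation. -/
def MemRoeAlgebraic (d : Y → Y → ℝ) (T : L2 Y H →L[ℂ] L2 Y H) : Prop :=
  LocallyCompact d T ∧ ∃ R : ℝ, PropagationLE d T R

/-- The Roe algebra `C*(Y)`: the operator-norm closure of `ℂ[Y]` in `B(ℓ²(Y,H))`. -/
def RoeAlgebra (d : Y → Y → ℝ) : Set (L2 Y H →L[ℂ] L2 Y H) :=
  closure {T | MemRoeAlgebraic d T}

/-- `T` is a ghost operator with respect to the distance function `d`. -/
def IsGhost (d : Y → Y → ℝ) (T : L2 Y H →L[ℂ] L2 Y H) : Prop :=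
  ∀ R : ℝ, 0 < R → ∀ ε : ℝ, 0 < ε → ∃ B : Set Y, DBounded d B ∧
    ∀ ξ : L2 Y H, ‖ξ‖ = 1 →
      (∃ x : Y, x ∉ B ∧ ∀ z : Y, ξ z ≠ 0 → d x z < R) → ‖T ξ‖ < ε

/-- The support of `ξ ∈ ℓ²(Y,H)` has diameter at most `S` for the distance function `d`. -/
def SupportDiamLE (d : Y → Y → ℝ) (ξ : L2 Y H) (S : ℝ) : Prop :=
  ∀ z w : Y, ξ z ≠ 0 → ξ w ≠ 0 → d z w ≤ S

end Roe

/-- `π : X' → X` is a `K`-metric cover: it is surjective, and for every `u` the restriction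
of `π` to the open ball of radius `K` about `u` is a distance-preserving bijection onto the
open ball of radius `K` about `π u`. -/
def IsMetricCover {X' X : Type*} (d' : X' → X' → ℝ) (d : X → X → ℝ)
    (π : X' → X) (K : ℝ) : Prop :=
  Function.Surjective π ∧
    ∀ u : X', Set.BijOn π {w | d' u w < K} {x | d (π u) x < K} ∧
      ∀ w w' : X', d' u w < K → d' u w' < K → d (π w) (π w') = d' w w'

/-- `T'` is the lift of `T` at scale `R` along `π`: its matrix entries are
`T'_{u,v} = T_{π u, π v}` when `d'(u,v) ≤ R` and `0` otherwise. -/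
def IsLift {X' X H : Type*} [NormedAddCommGroup H] [InnerProductSpace ℂ H]
    (π : X' → X) (d' : X' → X' → ℝ)
    (T : L2 X H →L[ℂ] L2 X H) (R : ℝ) (T' : L2 X' H →L[ℂ] L2 X' H) : Prop :=
  ∀ u v : X', (d' u v ≤ R → Roe.entry T' u v = Roe.entry T (π u) (π v)) ∧
    (R < d' u v → Roe.entry T' u v = 0)

/-- `T'` is the lift at scale `S` along `π` of the `n`-th diagonal block `T⁽ⁿ⁾ = PₙTPₙ` of a
bounded operator `T` on `ℓ²(⊔ₙ Vₙ, H)`. -/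
def IsBlockLift {V : ℕ → Type*} {W H : Type*} [NormedAddCommGroup H] [InnerProductSpace ℂ H]
    {n : ℕ} (π : W → V n) (d' : W → W → ℝ)
    (T : L2 (Σ k, V k) H →L[ℂ] L2 (Σ k, V k) H) (S : ℝ)
    (T' : L2 W H →L[ℂ] L2 W H) : Prop :=
  ∀ u v : W, (d' u v ≤ S → Roe.entry T' u v = Roe.entry T ⟨n, π u⟩ ⟨n, π v⟩) ∧
    (S < d' u v → Roe.entry T' u v = 0)

/-- The graph metric of a simple graph, as a real-valued distance function
(shortest path length). -/
def gdist {V : Type*} (G : SimpleGraph V) (u v : V) : ℝ := G.dist u v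

/-!
Root the tree at a vertex and cut it into the annuli `k r ≤ |v| < (k + 1) r`, splitting each
annulus according to the ancestor at depth `(k - 1) r`. The pieces have diameter at most `4 r`,
and distinct pieces whose annulus indices have the same parity are more than `r ≥ 2 R` apart, so
an operator of propagation `R` maps vectors supported on distinct pieces of one parity to
orthogonal vectors. Take a finitely supported `η` with `‖A η‖ > ‖A‖ ‖η‖ / 2`; one parity class
carries half of `‖A η‖`, and by Pythagoras one of its pieces `ψ` has `‖A ψ‖ ≥ ‖A‖ ‖ψ‖ / 4`.
-/

lemma Nat.add_lt_of_div_add_two_le {a b r : ℕ} (hr : 0 < r) (h : a / r + 2 ≤ b / r) :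
    a + r < b := by
  by_contra! hb
  have := Nat.div_le_div_right (c := r) hb
  rw [Nat.add_div_right a hr] at this
  omega

namespace SimpleGraph

variable {V : Type*} {G : SimpleGraph V}

lemma Walk.dist_getVert_le {u v : V} (p : G.Walk u v) (i : ℕ) : G.dist u (p.getVert i) ≤ i :=
  (dist_le (p.take i)).trans (by simp)

lemma Walk.dist_getVert_of_length_eq_dist (hG : G.Connected) {u v : V} (p : G.Walk u v)
    (hp : p.length = G.dist u v) {i : ℕ} (hi : i ≤ p.length) :
    G.dist u (p.getVert i) = i ∧ G.dist (p.getVert i) v + i = G.dist u v := by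
  have h₁ := p.dist_getVert_le i
  have h₂ := p.reverse.dist_getVert_le (p.length - i)
  rw [Walk.getVert_reverse, Nat.sub_sub_self hi, dist_comm] at h₂
  have := hG.dist_triangle (u := u) (v := p.getVert i) (w := v)
  omega

lemma IsAcyclic.support_subset_of_isPath (hG : G.IsAcyclic) {u v : V} {p : G.Walk u v}
    (hp : p.IsPath) (q : G.Walk u v) : p.support ⊆ q.support := by
  classical
  obtain rfl : p = q.bypass :=
    congrArg Subtype.val ((hG.subsingleton_path u v).elim ⟨p, hp⟩ ⟨_, q.bypass_isPath⟩)
  exact q.support_bypass_subset_support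

namespace IsTree

section Rooted

variable (hG : G.IsTree) (root : V)

noncomputable def ancestor (μ : ℕ) (v : V) : V :=
  (hG.connected.exists_path_of_dist root v).choose.getVert μ

/-- The depth `k r - r` is truncated, so the annuli `k ≤ 1` are single pieces. -/
noncomputable def piece (r : ℕ) (v : V) : ℕ × V :=
  (G.dist root v / r, hG.ancestor root (G.dist root v / r * r - r) v)

variable {hG root}

lemma ancestor_eq_getVert {v : V} (p : G.Walk root v) (hp : p.length = G.dist root v) (μ : ℕ) :
    hG.ancestor root μ v = p.getVert μ := by
  obtain ⟨hq, -⟩ := (hG.connected.exists_path_of_dist root v).choose_spec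
  have := (hG.isAcyclic.subsingleton_path root v).elim ⟨_, hq⟩ ⟨p, p.isPath_of_length_eq_dist hp⟩
  exact congrArg (fun q : G.Path root v => q.1.getVert μ) this

@[simp]
lemma ancestor_zero (v : V) : hG.ancestor root 0 v = root := Walk.getVert_zero _

lemma dist_ancestor {μ : ℕ} {v : V} (hμ : μ ≤ G.dist root v) :
    G.dist root (hG.ancestor root μ v) = μ ∧
      G.dist (hG.ancestor root μ v) v + μ = G.dist root v := by
  obtain ⟨-, hp⟩ := (hG.connected.exists_path_of_dist root v).choose_spec
  exact Walk.dist_getVert_of_length_eq_dist hG.connected _ hp (by rw [hp]; exact hμ)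

lemma ancestor_eq_of_dist_add_dist {x v : V}
    (hx : G.dist root x + G.dist x v = G.dist root v) :
    hG.ancestor root (G.dist root x) v = x := by
  obtain ⟨p, -, hp⟩ := hG.connected.exists_path_of_dist root x
  obtain ⟨q, -, hq⟩ := hG.connected.exists_path_of_dist x v
  rw [ancestor_eq_getVert (p.append q) (by rw [Walk.length_append, hp, hq, hx]),
    Walk.getVert_append, hp]
  simp

lemma dist_add_two_mul_le_of_ancestor_eq {μ : ℕ} {v w : V} (hv : μ ≤ G.dist root v)
    (hw : μ ≤ G.dist root w) (h : hG.ancestor root μ v = hG.ancestor root μ w) :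
    G.dist v w + 2 * μ ≤ G.dist root v + G.dist root w := by
  have hv' := (dist_ancestor (hG := hG) hv).2
  have hw' := (dist_ancestor (hG := hG) hw).2
  have := hG.connected.dist_triangle (u := v) (v := hG.ancestor root μ w) (w := w)
  rw [h, dist_comm (u := hG.ancestor root μ w) (v := v)] at hv'
  omega

lemma add_lt_dist_add_two_mul_of_ancestor_ne {μ : ℕ} {v w : V} (hw : μ ≤ G.dist root w)
    (h : hG.ancestor root μ v ≠ hG.ancestor root μ w) :
    G.dist root v + G.dist root w < G.dist v w + 2 * μ := by
  obtain ⟨ha, haw⟩ := dist_ancestor (hG := hG) hw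
  obtain ⟨p, -, hp⟩ := hG.connected.exists_path_of_dist root v
  obtain ⟨q, -, hq⟩ := hG.connected.exists_path_of_dist v w
  obtain ⟨r, hr, hr'⟩ := hG.connected.exists_path_of_dist root w
  have har : hG.ancestor root μ w ∈ (p.append q).support :=
    hG.isAcyclic.support_subset_of_isPath hr _ <| by
      rw [ancestor_eq_getVert r hr' μ]
      exact r.getVert_mem_support μ
  generalize hG.ancestor root μ w = a at *
  -- `a` is not on the path from `root` to `v`, so the geodesic from `v` to `w` runs through it.
  rcases (Walk.mem_support_append_iff _ _).1 har with hap | haq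
  · obtain ⟨n, rfl, hn⟩ := Walk.mem_support_iff_exists_getVert.1 hap
    obtain rfl : n = μ := (Walk.dist_getVert_of_length_eq_dist hG.connected p hp hn).1 ▸ ha
    exact absurd (ancestor_eq_getVert p hp n) h
  · obtain ⟨n, rfl, hnq⟩ := Walk.mem_support_iff_exists_getVert.1 haq
    obtain ⟨hva, haw'⟩ := Walk.dist_getVert_of_length_eq_dist hG.connected q hq hnq
    have htri := hG.connected.dist_triangle (u := root) (v := q.getVert n) (w := v)
    have hne : G.dist root (q.getVert n) + G.dist (q.getVert n) v ≠ G.dist root v := fun heq =>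
      h (ha ▸ ancestor_eq_of_dist_add_dist heq)
    rw [dist_comm (u := q.getVert n)] at htri hne
    omega

lemma dist_le_of_piece_eq {r : ℕ} (hr : 0 < r) {v w : V}
    (h : hG.piece root r v = hG.piece root r w) : G.dist v w ≤ 4 * r := by
  obtain ⟨hk, ha⟩ := Prod.ext_iff.1 h
  dsimp only [piece] at hk ha
  rw [hk] at ha
  have hv := Nat.lt_div_mul_add (a := G.dist root v) hr
  have hw := Nat.lt_div_mul_add (a := G.dist root w) hr
  have hv' := Nat.div_mul_le_self (G.dist root v) r
  have hw' := Nat.div_mul_le_self (G.dist root w) r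
  rw [hk] at hv hv'
  have := dist_add_two_mul_le_of_ancestor_eq (hG := hG) (by omega) (by omega) ha
  omega

lemma lt_dist_of_piece_ne {r : ℕ} (hr : 0 < r) {v w : V}
    (hpar : G.dist root v / r % 2 = G.dist root w / r % 2)
    (h : hG.piece root r v ≠ hG.piece root r w) : r < G.dist v w := by
  have hv' := Nat.div_mul_le_self (G.dist root v) r
  have hw' := Nat.div_mul_le_self (G.dist root w) r
  by_cases hk : G.dist root v / r = G.dist root w / r
  · have ha : hG.ancestor root (G.dist root w / r * r - r) v ≠
        hG.ancestor root (G.dist root w / r * r - r) w := fun ha => h (by simp [piece, hk, ha])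
    have hμ : G.dist root w / r * r - r ≠ 0 := fun h0 => by simp [h0] at ha
    have := add_lt_dist_add_two_mul_of_ancestor_ne (hG := hG) (by omega) ha
    rw [hk] at hv'
    omega
  · have hvw := hG.connected.dist_triangle (u := root) (v := v) (w := w)
    have hwv := hG.connected.dist_triangle (u := root) (v := w) (w := v)
    rw [dist_comm (u := w)] at hwv
    rcases (by omega : G.dist root v / r + 2 ≤ G.dist root w / r ∨
        G.dist root w / r + 2 ≤ G.dist root v / r) with hlt | hlt
    · have := Nat.add_lt_of_div_add_two_le hr hlt
      omega
    · have := Nat.add_lt_of_div_add_two_le hr hlt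
      omega

end Rooted

theorem exists_colored_partition (hG : G.IsTree) {r : ℕ} (hr : 0 < r) :
    ∃ (piece : V → ℕ × V) (color : ℕ × V → ZMod 2),
      (∀ v w, piece v = piece w → G.dist v w ≤ 4 * r) ∧
      ∀ v w, color (piece v) = color (piece w) → piece v ≠ piece w → r < G.dist v w := by
  obtain ⟨root⟩ := hG.connected.nonempty
  refine ⟨hG.piece root r, fun i => i.1, fun v w => hG.dist_le_of_piece_eq hr, fun v w hc => ?_⟩
  exact hG.lt_dist_of_piece_ne hr ((ZMod.natCast_eq_natCast_iff' _ _ 2).1 hc)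

end IsTree

end SimpleGraph

lemma exists_norm_sum_div_card_le {E κ : Type*} [SeminormedAddCommGroup E] [Fintype κ]
    [Nonempty κ] (x : κ → E) :
    ∃ k, ‖∑ k, x k‖ / Fintype.card κ ≤ ‖x k‖ := by
  obtain ⟨k, -, hk⟩ := Finset.exists_le_of_sum_le Finset.univ_nonempty
    (f := fun _ => ‖∑ k, x k‖ / Fintype.card κ) (g := fun k => ‖x k‖) <| by
      rw [Finset.sum_const, Finset.card_univ, nsmul_eq_mul, mul_div_cancel₀ _ (by positivity)]
      exact norm_sum_le _ _
  exact ⟨k, hk⟩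

section Orthogonal

variable {𝕜 E : Type*} [RCLike 𝕜] [NormedAddCommGroup E] [InnerProductSpace 𝕜 E]

lemma norm_sum_sq_of_pairwise_inner_eq_zero {ι : Type*} {s : Finset ι} {v : ι → E}
    (h : (s : Set ι).Pairwise fun i j => inner 𝕜 (v i) (v j) = 0) :
    ‖∑ i ∈ s, v i‖ ^ 2 = ∑ i ∈ s, ‖v i‖ ^ 2 := by
  have : ((‖∑ i ∈ s, v i‖ ^ 2 : ℝ) : 𝕜) = ((∑ i ∈ s, ‖v i‖ ^ 2 : ℝ) : 𝕜) := by
    push_cast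
    rw [← inner_self_eq_norm_sq_to_K, sum_inner]
    refine Finset.sum_congr rfl fun i hi => ?_
    rw [inner_sum, Finset.sum_eq_single_of_mem i hi fun j hj hji => h hi hj hji.symm,
      inner_self_eq_norm_sq_to_K]
  exact_mod_cast this

lemma exists_ne_zero_mul_norm_le_of_pairwise_inner_eq_zero {F M ι : Type*} [NormedAddCommGroup F]
    [InnerProductSpace 𝕜 F] [FunLike M E F] [AddMonoidHomClass M E F] (T : M)
    {s : Finset ι} {v : ι → E}
    (hv : (s : Set ι).Pairwise fun i j => inner 𝕜 (v i) (v j) = 0)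
    (hTv : (s : Set ι).Pairwise fun i j => inner 𝕜 (T (v i)) (T (v j)) = 0)
    {c : ℝ} (hc : 0 ≤ c) (h : c * ‖∑ i ∈ s, v i‖ ≤ ‖T (∑ i ∈ s, v i)‖)
    (h0 : T (∑ i ∈ s, v i) ≠ 0) :
    ∃ i ∈ s, v i ≠ 0 ∧ c * ‖v i‖ ≤ ‖T (v i)‖ := by
  classical
  have hsq : ∑ i ∈ s with v i ≠ 0, (c * ‖v i‖) ^ 2 ≤ ∑ i ∈ s with v i ≠ 0, ‖T (v i)‖ ^ 2 := by
    rw [Finset.sum_filter_of_ne fun i _ hi hvi => by simp [hvi] at hi,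
      Finset.sum_filter_of_ne fun i _ hi hvi => by simp [hvi] at hi]
    simp only [mul_pow, ← Finset.mul_sum]
    rw [← norm_sum_sq_of_pairwise_inner_eq_zero hv, ← norm_sum_sq_of_pairwise_inner_eq_zero hTv,
      ← map_sum, ← mul_pow]
    exact pow_le_pow_left₀ (by positivity) h 2
  have hne : (s.filter fun i => v i ≠ 0).Nonempty := by
    by_contra! hempty
    refine h0 ?_
    rw [← Finset.sum_filter_ne_zero, hempty, Finset.sum_empty, map_zero]
  obtain ⟨i, hi, hle⟩ := Finset.exists_le_of_sum_le hne hsq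
  rw [Finset.mem_filter] at hi
  exact ⟨i, hi.1, hi.2, (pow_le_pow_iff_left₀ (by positivity) (norm_nonneg _) two_ne_zero).1 hle⟩

end Orthogonal

lemma lp.inner_eq_zero_of_forall_eq_zero_or {𝕜 ι : Type*} [RCLike 𝕜] {G : ι → Type*}
    [∀ i, NormedAddCommGroup (G i)] [∀ i, InnerProductSpace 𝕜 (G i)] {u v : lp G 2}
    (h : ∀ i, u i = 0 ∨ v i = 0) : inner 𝕜 u v = 0 := by
  rw [lp.inner_eq_tsum]
  convert tsum_zero with i
  rcases h i with h | h <;> simp [h]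

namespace Roe

open Filter Topology

variable {Y H : Type*} [NormedAddCommGroup H] [InnerProductSpace ℂ H]

lemma entry_apply [DecidableEq Y] (T : L2 Y H →L[ℂ] L2 Y H) (x y : Y) (v : H) :
    entry T x y v = T (lp.single 2 y v) x := by
  have h : @lp.single _ (fun _ : Y => H) _ (Classical.decEq Y) 2 y v = lp.single 2 y v := by
    congr!
  exact congrArg (fun w => T w x) h

lemma exists_norm_eq_one_of_mul_norm_le {d : Y → Y → ℝ} {S c : ℝ} {T : L2 Y H →L[ℂ] L2 Y H}
    {ψ : L2 Y H} (hψ : ψ ≠ 0) (hS : SupportDiamLE d ψ S) (h : c * ‖ψ‖ ≤ ‖T ψ‖) :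
    ∃ ξ : L2 Y H, ‖ξ‖ = 1 ∧ SupportDiamLE d ξ S ∧ c ≤ ‖T ξ‖ := by
  have hψ' : 0 < ‖ψ‖ := norm_pos_iff.2 hψ
  refine ⟨(‖ψ‖⁻¹ : ℂ) • ψ, norm_smul_inv_norm hψ, fun z w hz hw => hS z w ?_ ?_, ?_⟩
  · exact fun h0 => hz (by simp [h0])
  · exact fun h0 => hw (by simp [h0])
  · rw [map_smul, norm_smul, norm_inv, Complex.norm_real, norm_norm, inv_mul_eq_div,
      le_div_iff₀ hψ']
    exact h

lemma exists_norm_eq_one_supportDiamLE [Nontrivial H] {d : Y → Y → ℝ} {S : ℝ} {y : Y}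
    (hy : d y y ≤ S) : ∃ ξ : L2 Y H, ‖ξ‖ = 1 ∧ SupportDiamLE d ξ S := by
  classical
  obtain ⟨e, he⟩ := exists_norm_eq H zero_le_one
  have hsupp : ∀ z, (lp.single 2 y e : L2 Y H) z ≠ 0 → z = y := fun z hz => by
    by_contra hzy
    exact hz (lp.single_apply_ne (E := fun _ : Y => H) 2 y e hzy)
  refine ⟨lp.single 2 y e, by simpa using he, fun z w hz hw => ?_⟩
  rwa [hsupp z hz, hsupp w hw]

section Restrict

variable [DecidableEq Y]

def restrict (s : Finset Y) (η : L2 Y H) : L2 Y H :=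
  ∑ y ∈ s, lp.single 2 y (η y)

lemma restrict_apply (s : Finset Y) (η : L2 Y H) (x : Y) :
    restrict s η x = if x ∈ s then η x else 0 := by
  simp only [restrict, lp.coeFn_sum, Finset.sum_apply, lp.coeFn_single, Finset.sum_pi_single]

lemma norm_restrict_sq (s : Finset Y) (η : L2 Y H) :
    ‖restrict s η‖ ^ 2 = ∑ y ∈ s, ‖η y‖ ^ 2 := by
  simpa [restrict] using lp.norm_sum_single (p := 2) (by norm_num) η s

lemma norm_restrict_le_of_subset {s t : Finset Y} (hst : s ⊆ t) (η : L2 Y H) :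
    ‖restrict s η‖ ≤ ‖restrict t η‖ := by
  refine (pow_le_pow_iff_left₀ (norm_nonneg _) (norm_nonneg _) two_ne_zero).1 ?_
  rw [norm_restrict_sq, norm_restrict_sq]
  exact Finset.sum_le_sum_of_subset_of_nonneg hst fun _ _ _ => sq_nonneg _

lemma supportDiamLE_restrict {d : Y → Y → ℝ} {S : ℝ} {s : Finset Y}
    (h : ∀ y ∈ s, ∀ z ∈ s, d y z ≤ S) (η : L2 Y H) : SupportDiamLE d (restrict s η) S := by
  have hmem : ∀ x, restrict s η x ≠ 0 → x ∈ s := fun x hx => by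
    by_contra hxs
    simp [restrict_apply, hxs] at hx
  exact fun y z hy hz => h y (hmem y hy) z (hmem z hz)

lemma sum_restrict_fiberwise {ι : Type*} [DecidableEq ι] {s : Finset Y} {t : Finset ι}
    {g : Y → ι} (hg : ∀ y ∈ s, g y ∈ t) (η : L2 Y H) :
    ∑ i ∈ t, restrict (s.filter fun y => g y = i) η = restrict s η :=
  Finset.sum_fiberwise_of_maps_to hg _

lemma inner_restrict_eq_zero {s t : Finset Y} (hst : Disjoint s t) (η η' : L2 Y H) :
    inner ℂ (restrict s η) (restrict t η') = 0 :=
  lp.inner_eq_zero_of_forall_eq_zero_or fun x => by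
    by_cases hx : x ∈ s
    · exact .inr (by simp [restrict_apply, Finset.disjoint_left.1 hst hx])
    · exact .inl (by simp [restrict_apply, hx])

lemma apply_restrict_apply (T : L2 Y H →L[ℂ] L2 Y H) (s : Finset Y) (η : L2 Y H) (x : Y) :
    T (restrict s η) x = ∑ y ∈ s, entry T x y (η y) := by
  simp only [restrict, map_sum, lp.coeFn_sum, Finset.sum_apply, entry_apply]

lemma apply_restrict_apply_eq_zero {T : L2 Y H →L[ℂ] L2 Y H} {s : Finset Y} {x : Y}
    (h : ∀ y ∈ s, entry T x y = 0) (η : L2 Y H) : T (restrict s η) x = 0 := by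
  rw [apply_restrict_apply]
  exact Finset.sum_eq_zero fun y hy => by rw [h y hy, zero_apply]

lemma inner_apply_restrict_eq_zero {d : Y → Y → ℝ} (hsymm : ∀ x y, d x y = d y x)
    (htri : ∀ x y z, d x z ≤ d x y + d y z) {T : L2 Y H →L[ℂ] L2 Y H} {R : ℝ}
    (hT : PropagationLE d T R) {s t : Finset Y} (hst : ∀ y ∈ s, ∀ z ∈ t, 2 * R < d y z)
    (η η' : L2 Y H) : inner ℂ (T (restrict s η)) (T (restrict t η')) = 0 := by
  refine lp.inner_eq_zero_of_forall_eq_zero_or fun x => ?_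
  by_cases hx : ∃ y ∈ s, d x y ≤ R
  · obtain ⟨y, hy, hxy⟩ := hx
    refine .inr (apply_restrict_apply_eq_zero (fun z hz => hT x z ?_) η')
    linarith [hst y hy z hz, htri y x z, hsymm x y]
  · push Not at hx
    exact .inl (apply_restrict_apply_eq_zero (fun y hy => hT x y (hx y hy)) η)

lemma exists_mul_norm_restrict_lt {F : Type*} [NormedAddCommGroup F] [NormedSpace ℂ F]
    (T : L2 Y H →L[ℂ] F) {c : ℝ} (hc0 : 0 ≤ c) (hc : c < ‖T‖) :
    ∃ (η : L2 Y H) (s : Finset Y), c * ‖restrict s η‖ < ‖T (restrict s η)‖ := by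
  obtain ⟨η, hη, hTη⟩ := T.exists_lt_apply_of_lt_opNorm hc
  have hlim : Tendsto (fun s => c * ‖restrict s η‖ - ‖T (restrict s η)‖) atTop
      (𝓝 (c * ‖η‖ - ‖T η‖)) :=
    ((((continuous_const.mul continuous_norm).sub (continuous_norm.comp T.continuous)).tendsto
      η).comp (lp.hasSum_single (by norm_num) η))
  have hneg : c * ‖η‖ - ‖T η‖ < 0 := by nlinarith [norm_nonneg η]
  obtain ⟨s, hs⟩ := (hlim.eventually (gt_mem_nhds hneg)).exists
  exact ⟨η, s, sub_neg.1 hs⟩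

end Restrict

theorem exists_norm_eq_one_supportDiamLE_of_colored_partition {ι κ : Type*} [Fintype κ]
    {d : Y → Y → ℝ} (hsymm : ∀ x y, d x y = d y x) (htri : ∀ x y z, d x z ≤ d x y + d y z)
    {piece : Y → ι} {color : ι → κ} {R S : ℝ}
    (hdiam : ∀ y z, piece y = piece z → d y z ≤ S)
    (hsep : ∀ y z, color (piece y) = color (piece z) → piece y ≠ piece z → 2 * R < d y z)
    {T : L2 Y H →L[ℂ] L2 Y H} (hT : PropagationLE d T R) {c : ℝ} (hc0 : 0 ≤ c) (hc : c < ‖T‖) :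
    ∃ ξ : L2 Y H, ‖ξ‖ = 1 ∧ SupportDiamLE d ξ S ∧ c / Fintype.card κ ≤ ‖T ξ‖ := by
  classical
  obtain ⟨η, F, hF⟩ := exists_mul_norm_restrict_lt T hc0 hc
  have hTF : 0 < ‖T (restrict F η)‖ := (mul_nonneg hc0 (norm_nonneg _)).trans_lt hF
  obtain ⟨y₀, -⟩ : F.Nonempty :=
    Finset.nonempty_iff_ne_empty.2 fun hF0 => by simp [hF0, restrict] at hTF
  have : Nonempty κ := ⟨color (piece y₀)⟩
  have hcard : (0 : ℝ) < Fintype.card κ := by exact_mod_cast Fintype.card_pos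
  obtain ⟨k, hk⟩ := exists_norm_sum_div_card_le fun k =>
    T (restrict (F.filter fun y => color (piece y) = k) η)
  rw [← map_sum, sum_restrict_fiberwise (g := fun y => color (piece y))
    fun _ _ => Finset.mem_univ _] at hk
  set Fk := F.filter fun y => color (piece y) = k
  have hFk : c / Fintype.card κ * ‖restrict Fk η‖ ≤ ‖T (restrict Fk η)‖ := calc
    c / Fintype.card κ * ‖restrict Fk η‖ ≤ c / Fintype.card κ * ‖restrict F η‖ := by
      gcongr
      exact norm_restrict_le_of_subset (Finset.filter_subset _ _) η
    _ = c * ‖restrict F η‖ / Fintype.card κ := by ring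
    _ ≤ ‖T (restrict F η)‖ / Fintype.card κ := by gcongr
    _ ≤ ‖T (restrict Fk η)‖ := hk
  have hFk0 : T (restrict Fk η) ≠ 0 := norm_pos_iff.1 ((div_pos hTF hcard).trans_le hk)
  rw [← sum_restrict_fiberwise fun y hy => Finset.mem_image_of_mem piece hy] at hFk hFk0
  obtain ⟨i, -, hi0, hi⟩ := exists_ne_zero_mul_norm_le_of_pairwise_inner_eq_zero T
    (fun i _ j _ hij => inner_restrict_eq_zero
      (Finset.disjoint_filter.2 fun y _ hyi hyj => hij (hyi ▸ hyj)) η η)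
    (fun i _ j _ hij => inner_apply_restrict_eq_zero hsymm htri hT
      (fun y hy z hz => by
        simp only [Fk, Finset.mem_filter] at hy hz
        exact hsep y z (hy.1.2.trans hz.1.2.symm) (hy.2.trans_ne (hz.2 ▸ hij))) η η)
    (by positivity) hFk hFk0
  refine exists_norm_eq_one_of_mul_norm_le hi0 (supportDiamLE_restrict (fun y hy z hz => ?_) η) hi
  simp only [Finset.mem_filter] at hy hz
  exact hdiam y z (hy.2.trans hz.2.symm)

end Roe

theorem trees_uniform_operator_norm_localization_general
    (H₀ : Type) [NormedAddCommGroup H₀] [InnerProductSpace ℂ H₀]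
    (hinf : ¬ FiniteDimensional ℂ H₀) :
    ∃ c : ℝ, 0 < c ∧ c ≤ 1 ∧
      ∀ R : ℝ, 0 < R → ∃ S : ℝ, 0 < S ∧
        ∀ (V : Type) (_ : Countable V) (G : SimpleGraph V), G.IsTree →
          ∀ A : L2 V H₀ →L[ℂ] L2 V H₀,
            Roe.LocallyCompact (gdist G) A → Roe.PropagationLE (gdist G) A R →
            ∃ ξ : L2 V H₀, ‖ξ‖ = 1 ∧ Roe.SupportDiamLE (gdist G) ξ S ∧
              c * ‖A‖ ≤ ‖A ξ‖ := by
  have : Nontrivial H₀ := not_subsingleton_iff_nontrivial.1 fun _ => hinf inferInstance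
  refine ⟨1 / 4, by norm_num, by norm_num, fun R hR => ?_⟩
  have hr : 0 < ⌈2 * R⌉₊ := Nat.ceil_pos.2 (by positivity)
  refine ⟨4 * ⌈2 * R⌉₊, by positivity, fun V _ G hG A _ hA => ?_⟩
  rcases eq_or_ne A 0 with rfl | hA0
  · obtain ⟨ξ, hξ, hξS⟩ := Roe.exists_norm_eq_one_supportDiamLE (H := H₀) (d := gdist G)
      (S := 4 * ⌈2 * R⌉₊) (y := hG.connected.nonempty.some) (by simp [gdist])
    exact ⟨ξ, hξ, hξS, by simp [ContinuousLinearMap.opNorm_zero]⟩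
  have hA' : 0 < ‖A‖ := (norm_pos_iff (E := L2 V H₀ →L[ℂ] L2 V H₀)).2 hA0
  obtain ⟨piece, color, hdiam, hsep⟩ := hG.exists_colored_partition hr
  obtain ⟨ξ, hξ, hξS, hAξ⟩ := Roe.exists_norm_eq_one_supportDiamLE_of_colored_partition
    (d := gdist G) (S := 4 * ⌈2 * R⌉₊) (c := ‖A‖ / 2)
    (fun x y => by simp [gdist, SimpleGraph.dist_comm])
    (fun x y z => by simpa [gdist] using mod_cast hG.connected.dist_triangle)
    (fun v w h => by simpa [gdist] using mod_cast hdiam v w h)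
    (fun v w hc hne => (Nat.le_ceil _).trans_lt (by simpa [gdist] using mod_cast hsep v w hc hne))
    hA (by positivity) (half_lt_self hA')
  refine ⟨ξ, hξ, hξS, ?_⟩
  rw [ZMod.card] at hAξ
  linarith

/-- the family of all countable trees has the uniform operator norm
localization property. -/
theorem trees_uniform_operator_norm_localization
    (H₀ : Type) [NormedAddCommGroup H₀] [InnerProductSpace ℂ H₀] [CompleteSpace H₀]
    [TopologicalSpace.SeparableSpace H₀] (hinf : ¬ FiniteDimensional ℂ H₀) :
    ∃ c : ℝ, 0 < c ∧ c ≤ 1 ∧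
      ∀ R : ℝ, 0 < R → ∃ S : ℝ, 0 < S ∧
        ∀ (V : Type) (_ : Countable V) (G : SimpleGraph V), G.IsTree →
          ∀ A : L2 V H₀ →L[ℂ] L2 V H₀,
            Roe.LocallyCompact (gdist G) A → Roe.PropagationLE (gdist G) A R →
            ∃ ξ : L2 V H₀, ‖ξ‖ = 1 ∧ Roe.SupportDiamLE (gdist G) ξ S ∧
              c * ‖A‖ ≤ ‖A ξ‖ :=
  trees_uniform_operator_norm_localization_general H₀ hinf
end
end

section
/- Let G be a connected simple graph with infinitely many vertices in which every vertex has degree at least 1 and at most k. Then the normalized Laplacian Δ of G defines a bounded operator on ℓ²(V(G)), and this operator is injective; in particular 0 is not an eigenvalue of Δ. -/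
noncomputable section

open scoped ENNReal

/-!
Write `Δ = 1 - A` with `A` the normalized adjacency operator; Cauchy–Schwarz gives `‖A‖ ≤ 1`,
so `Δ` is bounded. If `A f = f`, the function `h = |f| / √deg` is subharmonic,
`deg x * h x ≤ ∑_{y ~ x} h y`, and tends to `0` at infinity because `f ∈ ℓ²`. Hence `h` attains
its maximum; by the maximum principle and connectedness `h` is constant, and a constant tending
to `0` along the cofinite filter of an infinite set is `0`.
-/

open Filter Topology Finset

theorem Filter.Tendsto.exists_isMaxOn_of_lt {α β : Type*} [LinearOrder β]
    [TopologicalSpace β] [OrderTopology β] {f : α → β} {b : β} (hf : Tendsto f cofinite (𝓝 b))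
    {x : α} (hx : b < f x) : ∃ x₀, IsMaxOn f Set.univ x₀ := by
  have hfin : {z | f x ≤ f z}.Finite := by
    simpa only [not_lt] using eventually_cofinite.1 (hf.eventually (gt_mem_nhds hx))
  obtain ⟨x₀, hx₀, hmax⟩ := Set.exists_max_image _ f hfin ⟨x, le_rfl⟩
  refine ⟨x₀, fun z _ => ?_⟩
  rcases le_or_gt (f x) (f z) with hz | hz
  · exact hmax z hz
  · exact hz.le.trans hx₀

theorem lp.tendsto_norm_cofinite_zero {α : Type*} {E : α → Type*}
    [∀ i, NormedAddCommGroup (E i)] {p : ℝ≥0∞} (hp : 0 < p.toReal) (f : lp E p) :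
    Tendsto (fun i => ‖f i‖) cofinite (𝓝 0) := by
  have h := ((lp.memℓp f).summable hp).tendsto_cofinite_zero.rpow_const (p := p.toReal⁻¹)
    (Or.inr (inv_nonneg.2 hp.le))
  simpa only [Real.rpow_rpow_inv (norm_nonneg _) hp.ne', Real.zero_rpow (inv_ne_zero hp.ne')]
    using h

theorem lp.sum_norm_sq_le_norm_sq {α : Type*} {E : α → Type*}
    [∀ i, NormedAddCommGroup (E i)] (f : lp E 2) (s : Finset α) : ∑ i ∈ s, ‖f i‖ ^ 2 ≤ ‖f‖ ^ 2 := by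
  simpa only [ENNReal.toReal_ofNat, Real.rpow_two] using lp.sum_rpow_le_norm_rpow (by norm_num) f s

theorem norm_div_ofReal_sqrt_mul (z : ℂ) {a : ℝ} (ha : 0 ≤ a) (b : ℝ) :
    ‖z / (Real.sqrt (a * b) : ℂ)‖ = (Real.sqrt a)⁻¹ * (‖z‖ / Real.sqrt b) := by
  rw [norm_div, Complex.norm_real, Real.norm_of_nonneg (Real.sqrt_nonneg _), Real.sqrt_mul ha]
  ring

namespace SimpleGraph

variable {V : Type*} (G : SimpleGraph V) [∀ v, Fintype (G.neighborSet v)]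

def IsSubharmonic (h : V → ℝ) : Prop :=
  ∀ x, G.degree x * h x ≤ ∑ y ∈ G.neighborFinset x, h y

variable {G}

theorem IsSubharmonic.eq_of_isMaxOn_of_adj {h : V → ℝ} (hh : G.IsSubharmonic h) {x y : V}
    (hmax : IsMaxOn h Set.univ x) (hxy : G.Adj x y) : h y = h x := by
  have hle : ∀ z ∈ G.neighborFinset x, h z ≤ h x := fun z _ => hmax (Set.mem_univ z)
  have hsum : ∑ z ∈ G.neighborFinset x, h z = ∑ z ∈ G.neighborFinset x, h x := by
    refine le_antisymm (sum_le_sum hle) ?_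
    rw [sum_const, card_neighborFinset_eq_degree, nsmul_eq_mul]
    exact hh x
  exact (sum_eq_sum_iff_of_le hle).1 hsum y ((G.mem_neighborFinset x y).2 hxy)

theorem IsSubharmonic.eq_of_isMaxOn {h : V → ℝ} (hh : G.IsSubharmonic h) (hG : G.Preconnected)
    {x : V} (hmax : IsMaxOn h Set.univ x) (z : V) : h z = h x := by
  suffices ∀ {u w : V} (p : G.Walk u w), h u = h x → h w = h x from this (hG x z).some rfl
  intro u w p
  induction p with
  | nil => exact id
  | cons hadj _ ih =>
    intro hu
    have hmax' : IsMaxOn h Set.univ _ := fun z hz => hu ▸ hmax hz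
    exact ih ((hh.eq_of_isMaxOn_of_adj hmax' hadj).trans hu)

theorem IsSubharmonic.eq_zero_of_tendsto_cofinite [Infinite V] {h : V → ℝ}
    (hh : G.IsSubharmonic h) (hG : G.Preconnected) (h0 : 0 ≤ h)
    (hlim : Tendsto h cofinite (𝓝 0)) : h = 0 := by
  by_contra hne
  obtain ⟨x, hx⟩ := Function.ne_iff.1 hne
  obtain ⟨x₀, hmax⟩ := hlim.exists_isMaxOn_of_lt ((h0 x).lt_of_ne' hx)
  have hconst : h = fun _ => h x₀ := funext (hh.eq_of_isMaxOn hG hmax)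
  rw [hconst, tendsto_const_nhds_iff] at hlim
  exact hx (le_antisymm ((hmax (Set.mem_univ x)).trans_eq hlim) (h0 x))

variable (G)

def normAdj (f : V → ℂ) (x : V) : ℂ :=
  ∑ y ∈ G.neighborFinset x, f y / (Real.sqrt ((G.degree x : ℝ) * (G.degree y : ℝ)) : ℂ)

/-- Cauchy–Schwarz with weights `(deg x)⁻¹ᐟ²` and `(deg y)⁻¹ᐟ²`. -/
theorem norm_normAdj_sq_le (f : V → ℂ) (x : V) :
    ‖G.normAdj f x‖ ^ 2 ≤ ∑ y ∈ G.neighborFinset x, ‖f y‖ ^ 2 / G.degree y := by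
  have hweight : ∑ _y ∈ G.neighborFinset x, ((√(G.degree x : ℝ))⁻¹) ^ 2 ≤ 1 := by
    rw [sum_const, card_neighborFinset_eq_degree, nsmul_eq_mul, inv_pow,
      Real.sq_sqrt (Nat.cast_nonneg _)]
    exact mul_inv_le_one
  calc ‖G.normAdj f x‖ ^ 2
      ≤ (∑ y ∈ G.neighborFinset x, (√(G.degree x : ℝ))⁻¹ * (‖f y‖ / √(G.degree y : ℝ))) ^ 2 := by
        gcongr
        refine (norm_sum_le _ _).trans_eq (sum_congr rfl fun y _ => ?_)
        exact norm_div_ofReal_sqrt_mul _ (Nat.cast_nonneg _) _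
    _ ≤ (∑ _y ∈ G.neighborFinset x, ((√(G.degree x : ℝ))⁻¹) ^ 2) *
          ∑ y ∈ G.neighborFinset x, (‖f y‖ / √(G.degree y : ℝ)) ^ 2 :=
        sum_mul_sq_le_sq_mul_sq _ _ _
    _ ≤ ∑ y ∈ G.neighborFinset x, (‖f y‖ / √(G.degree y : ℝ)) ^ 2 :=
        mul_le_of_le_one_left (sum_nonneg fun _ _ => sq_nonneg _) hweight
    _ = ∑ y ∈ G.neighborFinset x, ‖f y‖ ^ 2 / G.degree y := by
        simp only [div_pow, Real.sq_sqrt (Nat.cast_nonneg _)]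

theorem sum_norm_normAdj_sq_le (f : V → ℂ) {C : ℝ}
    (hC : ∀ s : Finset V, ∑ y ∈ s, ‖f y‖ ^ 2 ≤ C) (s : Finset V) :
    ∑ x ∈ s, ‖G.normAdj f x‖ ^ 2 ≤ C := by
  classical
  have hswap : ∑ x ∈ s, ∑ y ∈ G.neighborFinset x, ‖f y‖ ^ 2 / G.degree y =
      ∑ y ∈ s.biUnion fun x => G.neighborFinset x, ∑ _x ∈ (G.neighborFinset y).filter (· ∈ s),
        ‖f y‖ ^ 2 / G.degree y :=
    sum_comm' fun x y => by
      simp only [mem_biUnion, mem_filter, mem_neighborFinset, G.adj_comm]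
      tauto
  have hfiber (y : V) :
      ∑ _x ∈ (G.neighborFinset y).filter (· ∈ s), ‖f y‖ ^ 2 / G.degree y ≤ ‖f y‖ ^ 2 := by
    rw [sum_const, nsmul_eq_mul, mul_div_left_comm]
    refine mul_le_of_le_one_right (sq_nonneg _) (div_le_one_of_le₀ ?_ (Nat.cast_nonneg _))
    exact_mod_cast (card_filter_le _ _).trans (G.card_neighborFinset_eq_degree y).le
  calc ∑ x ∈ s, ‖G.normAdj f x‖ ^ 2
      ≤ ∑ x ∈ s, ∑ y ∈ G.neighborFinset x, ‖f y‖ ^ 2 / G.degree y :=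
        sum_le_sum fun x _ => G.norm_normAdj_sq_le f x
    _ ≤ ∑ y ∈ s.biUnion fun x => G.neighborFinset x, ‖f y‖ ^ 2 :=
        hswap.trans_le (sum_le_sum fun y _ => hfiber y)
    _ ≤ C := hC _

theorem memℓp_normAdj (f : L2 V ℂ) : Memℓp (G.normAdj f) 2 :=
  memℓp_gen' (C := ‖f‖ ^ 2) fun s => by
    simpa only [ENNReal.toReal_ofNat, Real.rpow_two]
      using G.sum_norm_normAdj_sq_le f (lp.sum_norm_sq_le_norm_sq f) s

def normAdjL2 : L2 V ℂ →L[ℂ] L2 V ℂ :=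
  LinearMap.mkContinuous
    { toFun := fun f => ⟨G.normAdj f, G.memℓp_normAdj f⟩
      map_add' := fun f g => lp.ext <| funext fun x => by
        show G.normAdj (⇑(f + g)) x = G.normAdj f x + G.normAdj g x
        simp only [normAdj, lp.coeFn_add, Pi.add_apply, add_div, sum_add_distrib]
      map_smul' := fun c f => lp.ext <| funext fun x => by
        show G.normAdj (⇑(c • f)) x = c * G.normAdj f x
        simp only [normAdj, lp.coeFn_smul, Pi.smul_apply, smul_eq_mul, mul_sum, mul_div_assoc] }
    1 fun f => by
      rw [one_mul]
      refine lp.norm_le_of_forall_sum_le (p := 2) (by norm_num) (norm_nonneg f) fun s => ?_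
      simp only [ENNReal.toReal_ofNat, Real.rpow_two]
      exact G.sum_norm_normAdj_sq_le f (lp.sum_norm_sq_le_norm_sq f) s

variable {G}

theorem isSubharmonic_norm_div_sqrt_degree {f : V → ℂ} (hf : ∀ x, G.normAdj f x = f x) :
    G.IsSubharmonic fun x => ‖f x‖ / √(G.degree x : ℝ) := by
  intro x
  rcases (G.degree x).eq_zero_or_pos with h0 | hpos
  · rw [h0, Nat.cast_zero, zero_mul]
    exact sum_nonneg fun _ _ => by positivity
  have hs : 0 < √(G.degree x : ℝ) := Real.sqrt_pos.2 (by exact_mod_cast hpos)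
  calc (G.degree x : ℝ) * (‖f x‖ / √(G.degree x : ℝ))
      = √(G.degree x : ℝ) * ‖G.normAdj f x‖ := by
        rw [hf, mul_div_assoc', div_eq_iff hs.ne', mul_right_comm,
          Real.mul_self_sqrt (Nat.cast_nonneg _)]
    _ ≤ √(G.degree x : ℝ) * ∑ y ∈ G.neighborFinset x,
          (√(G.degree x : ℝ))⁻¹ * (‖f y‖ / √(G.degree y : ℝ)) := by
        gcongr
        refine (norm_sum_le _ _).trans_eq (sum_congr rfl fun y _ => ?_)
        exact norm_div_ofReal_sqrt_mul _ (Nat.cast_nonneg _) _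
    _ = ∑ y ∈ G.neighborFinset x, ‖f y‖ / √(G.degree y : ℝ) := by
        rw [mul_sum]
        exact sum_congr rfl fun y _ => by rw [mul_inv_cancel_left₀ hs.ne']

theorem Preconnected.eq_zero_of_normAdj_eq_self [Infinite V] (hG : G.Preconnected) {f : L2 V ℂ}
    (hf : ∀ x, G.normAdj f x = f x) : f = 0 := by
  have hdeg : ∀ x, 1 ≤ √(G.degree x : ℝ) := fun x =>
    Real.one_le_sqrt.2 (Nat.one_le_cast.2 (hG.degree_pos_of_nontrivial x))
  have hlim : Tendsto (fun x => ‖f x‖ / √(G.degree x : ℝ)) cofinite (𝓝 0) :=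
    squeeze_zero (fun _ => by positivity) (fun x => div_le_self (norm_nonneg _) (hdeg x))
      (lp.tendsto_norm_cofinite_zero (by norm_num) f)
  have hzero := (isSubharmonic_norm_div_sqrt_degree hf).eq_zero_of_tendsto_cofinite hG
    (fun _ => by positivity) hlim
  ext x
  simpa [(zero_lt_one.trans_le (hdeg x)).ne'] using congrFun hzero x

end SimpleGraph

/-- the normalized Laplacian of an infinite connected graph with degrees
bounded between 1 and k is a bounded operator on ℓ²(V(G)), and it is injective; in
particular 0 is not an eigenvalue. -/
theorem laplacian_injective_on_infinite_graph
    (V : Type) [Infinite V] (G : SimpleGraph V) [∀ v : V, Fintype (G.neighborSet v)]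
    (hconn : G.Connected) (k : ℕ)
    (hdeg₁ : ∀ v : V, 1 ≤ G.degree v) (hdegk : ∀ v : V, G.degree v ≤ k) :
    ∃ Δ : L2 V ℂ →L[ℂ] L2 V ℂ,
      (∀ (f : L2 V ℂ) (x : V),
        Δ f x = f x - ∑ y ∈ G.neighborFinset x,
          f y / (Real.sqrt ((G.degree x : ℝ) * (G.degree y : ℝ)) : ℂ)) ∧
      Function.Injective Δ := by
  refine ⟨1 - G.normAdjL2, fun f x => rfl, (injective_iff_map_eq_zero _).2 fun f hf => ?_⟩
  refine hconn.preconnected.eq_zero_of_normAdj_eq_self fun x => ?_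
  have hx : f x - G.normAdj f x = 0 := congrArg (fun g : L2 V ℂ => g x) hf
  exact (sub_eq_zero.1 hx).symm

end
end

section
/- Let G be a connected simple graph, let T be a connected acyclic simple graph (a tree), and let π : T → G be a graph covering map, that is, a graph homomorphism which maps the neighbours of each vertex v of T bijectively onto the neighbours of π(v). Let R be a natural number and suppose girth(G) > 4R. Then for every vertex v of T, π restricts to a bijection from the closed ball {u ∈ V(T) : d_T(u,v) ≤ R} onto the closed ball {x ∈ V(G) : d_G(x,π(v)) ≤ R}, and d_G(π(u),π(w)) = d_T(u,w) for all u,w in this ball. (Consequently, the universal covering maps of a sequence of finite connected graphs whose girths tend to infinity form an asymptotically faithful covering sequence.) -/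
/-!
A homomorphism of simple graphs that is injective on every neighbourhood maps each path shorter
than the girth of the target to a path: if the image walk returned to its starting point, its
first return would close up a cycle, except in the degenerate case of an immediate back-and-forth
step, which local injectivity excludes. Hence two vertices at distance less than the girth with
the same image coincide.

Local surjectivity lifts walks of the target with their lengths, so a shortest path from `π u`
to `π w` lifts to a walk from `u` to some `w'` over `π w`. When `2 d(u, w)` is less than the girth,
`w'` and `w` are close enough to coincide, which forces `d(π u, π w) = d(u, w)`. Two points of a
ball of radius `R` are at distance at most `2R`, and `4R` is less than the girth.
-/


noncomputable section

open scoped ENNReal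

namespace SimpleGraph

variable {V W : Type*} {G : SimpleGraph V} {H : SimpleGraph W}

theorem Walk.IsPath.map_of_length_lt_egirth (f : G →g H)
    (hf : ∀ v, Set.InjOn f (G.neighborSet v)) {u v : V} {p : G.Walk u v} (hp : p.IsPath)
    (hlen : (p.length : ℕ∞) < H.egirth) : (p.map f).IsPath := by
  classical
  induction p with
  | nil => simp
  | @cons a a₁ b h p ih =>
    rw [Walk.cons_isPath_iff] at hp
    have hq := ih hp.1 (lt_of_le_of_lt (by simp) hlen)
    rw [Walk.map_cons, Walk.cons_isPath_iff]
    refine ⟨hq, fun hmem => ?_⟩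
    set q := p.map f
    by_cases he : s(f a, f a₁) ∈ (q.takeUntil (f a) hmem).edges
    · -- the image walk steps straight back along the edge it came by
      have hsnd : f a = q.snd := hq.eq_snd_of_mem_edges
        (q.edges_takeUntil_subset_edges hmem (Sym2.eq_swap ▸ he))
      cases p with
      | nil => exact (f.map_adj h).ne (by simpa [q] using hmem)
      | cons h' p' =>
        refine hp.2 ?_
        have : a = _ := hf a₁ h.symm h' (by simpa [q] using hsnd)
        simp [this]
    · have hc : (Walk.cons (f.map_adj h) (q.takeUntil (f a) hmem)).IsCycle :=
        (Walk.cons_isCycle_iff _ _).mpr ⟨hq.takeUntil hmem, he⟩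
      have hlen' : (q.takeUntil (f a) hmem).length + 1 ≤ (Walk.cons h p).length := by
        simpa [q] using q.length_takeUntil_le_length hmem
      exact (egirth_le_length hc).not_gt (lt_of_le_of_lt (by exact_mod_cast hlen') hlen)

theorem Hom.eq_of_map_eq_of_dist_lt_egirth (f : G →g H)
    (hf : ∀ v, Set.InjOn f (G.neighborSet v)) {a b : V} (hab : G.Reachable a b)
    (hfab : f a = f b) (hdist : (G.dist a b : ℕ∞) < H.egirth) : a = b := by
  obtain ⟨p, hp, hlen⟩ := hab.exists_path_of_dist
  have hnil : ((p.map f).copy rfl hfab.symm).Nil :=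
    Walk.isPath_iff_nil.mp ((Walk.isPath_copy _ _ _).mpr
      (hp.map_of_length_lt_egirth f hf (hlen ▸ hdist)))
  have : p.length = 0 := by simpa using Walk.length_eq_zero_iff.mpr hnil
  exact hab.dist_eq_zero_iff.mp (hlen ▸ this)

theorem Hom.dist_map_le (f : G →g H) {u v : V} (huv : G.Reachable u v) :
    H.dist (f u) (f v) ≤ G.dist u v := by
  obtain ⟨p, hp⟩ := huv.exists_walk_length_eq_dist
  simpa [hp] using dist_le (p.map f)

theorem Walk.exists_lift (f : G →g H)
    (hf : ∀ v, Set.SurjOn f (G.neighborSet v) (H.neighborSet (f v))) {x y : W}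
    (p : H.Walk x y) {u : V} (hu : f u = x) :
    ∃ (u' : V) (q : G.Walk u u'), f u' = y ∧ q.length = p.length := by
  induction p generalizing u with
  | nil => exact ⟨u, .nil, hu, rfl⟩
  | cons h p ih =>
    subst hu
    obtain ⟨u₁, hu₁ : G.Adj u u₁, hfu₁⟩ := hf u h
    obtain ⟨u', q, hu', hq⟩ := ih hfu₁
    exact ⟨u', .cons hu₁ q, hu', by simp [hq]⟩

theorem Hom.exists_preimage_dist_le (f : G →g H)
    (hf : ∀ v, Set.SurjOn f (G.neighborSet v) (H.neighborSet (f v))) {u : V} {x : W}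
    (hx : H.Reachable (f u) x) : ∃ u', f u' = x ∧ G.dist u u' ≤ H.dist (f u) x := by
  obtain ⟨p, hp⟩ := hx.exists_walk_length_eq_dist
  obtain ⟨u', q, hu', hq⟩ := p.exists_lift f hf rfl
  exact ⟨u', hu', hp ▸ hq ▸ dist_le q⟩

theorem Hom.dist_map_eq_of_two_mul_dist_lt_egirth (f : G →g H)
    (hinj : ∀ v, Set.InjOn f (G.neighborSet v))
    (hsurj : ∀ v, Set.SurjOn f (G.neighborSet v) (H.neighborSet (f v)))
    (hG : G.Connected) {u v : V} (hdist : ((2 * G.dist u v : ℕ) : ℕ∞) < H.egirth) :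
    H.dist (f u) (f v) = G.dist u v := by
  have hle := f.dist_map_le (hG u v)
  obtain ⟨u', hu', hdist'⟩ := f.exists_preimage_dist_le hsurj ((hG u v).map f)
  have hu'v : u' = v := by
    refine f.eq_of_map_eq_of_dist_lt_egirth hinj (hG u' v) hu' (lt_of_le_of_lt ?_ hdist)
    have := hG.dist_triangle (u := u') (v := u) (w := v)
    have := dist_comm (G := G) (u := u') (v := u)
    exact_mod_cast (by omega : G.dist u' v ≤ 2 * G.dist u v)
  subst hu'v
  omega

end SimpleGraph

/-- a covering map from a tree to a connected graph of girth greater than `4R`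
restricts to a distance-preserving bijection on closed balls of radius `R`. -/
theorem covering_map_isometric_on_balls_of_large_girth
    (VG VT : Type) (G : SimpleGraph VG) (T : SimpleGraph VT)
    (hG : G.Connected) (hT : T.IsTree)
    (π : VT → VG)
    (hhom : ∀ u v : VT, T.Adj u v → G.Adj (π u) (π v))
    (hloc : ∀ v : VT, Set.BijOn π (T.neighborSet v) (G.neighborSet (π v)))
    (R : ℕ) (hg : (4 * R : ℕ∞) < G.egirth) :
    ∀ v : VT,
      Set.BijOn π {u : VT | T.dist u v ≤ R} {x : VG | G.dist x (π v) ≤ R} ∧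
      ∀ u w : VT, T.dist u v ≤ R → T.dist w v ≤ R →
        G.dist (π u) (π w) = T.dist u w := by
  intro v
  let f : T →g G := ⟨π, hhom _ _⟩
  have hinj : ∀ v, Set.InjOn f (T.neighborSet v) := fun v => (hloc v).injOn
  have hsurj : ∀ v, Set.SurjOn f (T.neighborSet v) (G.neighborSet (f v)) :=
    fun v => (hloc v).surjOn
  have hTconn := hT.connected
  have hball : ∀ {u w}, T.dist u v ≤ R → T.dist w v ≤ R →
      ((2 * T.dist u w : ℕ) : ℕ∞) < G.egirth := by
    intro u w hu hw
    have := hTconn.dist_triangle (u := u) (v := v) (w := w)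
    have := SimpleGraph.dist_comm (G := T) (u := v) (v := w)
    exact lt_of_le_of_lt (by norm_cast; omega) hg
  refine ⟨⟨fun u hu => ?_, fun u hu w hw huw => ?_, fun x hx => ?_⟩, fun u w hu hw => ?_⟩
  · exact (f.dist_map_le (hTconn u v)).trans hu
  · refine f.eq_of_map_eq_of_dist_lt_egirth hinj (hTconn u w) huw
      (lt_of_le_of_lt ?_ (hball hu hw))
    exact_mod_cast Nat.le_mul_of_pos_left _ two_pos
  · obtain ⟨u, rfl, hdist⟩ := f.exists_preimage_dist_le hsurj (hG (π v) x)
    refine ⟨u, ?_, rfl⟩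
    rw [Set.mem_ofPred_eq, SimpleGraph.dist_comm] at hx ⊢
    exact hdist.trans hx
  · exact f.dist_map_eq_of_two_mul_dist_lt_egirth hinj hsurj hTconn (hball hu hw)

end
end
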